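/- Let C be a compact Hausdorff topological space, let Y ⊆ ℝ^q be a subset for which there exist an open set W ⊆ ℝ^q with Y ⊆ W and a continuous retraction r : W → Y (i.e., r(y) = y for all y ∈ Y), let f : C → Y be a continuous map, let ε > 0, and let D be a closed subset of C. Then there exists a constant δ > 0 with the following property: for every continuous map φ : D → Y satisfying ‖f(x) − φ(x)‖ < δ for all x ∈ D, there exists a continuous map g : C → Y such that g|_D = φ and ‖f(x) − g(x)‖ < ε for all x ∈ C. -/
import Mathlib


open scoped unitInterval

/-- Let `A` be a compact Hausdorff space, `Y ⊆ ℝ^q` a subset admitting a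
continuous retraction from an open neighborhood, `f : A → Y` continuous, `ε > 0` and
`D ⊆ A` closed. Then there is `δ > 0` such that every continuous `φ : D → Y` that is
`δ`-close to `f` on `D` extends to a continuous `g : A → Y` that is `ε`-close to `f`. -/
theorem statement7 {q : ℕ} (A : Type) [TopologicalSpace A] [CompactSpace A] [T2Space A]
    (Y : Set (EuclideanSpace ℝ (Fin q)))
    (hretr : ∃ W : Set (EuclideanSpace ℝ (Fin q)), IsOpen W ∧
      ∃ (hYW : Y ⊆ W) (r : C(W, Y)),
        ∀ y : Y, (r ⟨(y : EuclideanSpace ℝ (Fin q)), hYW y.2⟩ : EuclideanSpace ℝ (Fin q)) = y)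
    (f : C(A, Y)) (ε : ℝ) (hε : 0 < ε) (D : Set A) (hD : IsClosed D) :
    ∃ δ > 0, ∀ φ : C(D, Y),
      (∀ x : D, ‖(f (x : A) : EuclideanSpace ℝ (Fin q)) -
        (φ x : EuclideanSpace ℝ (Fin q))‖ < δ) →
      ∃ g : C(A, Y), (∀ x : D, g (x : A) = φ x) ∧
        ∀ x : A, ‖(f x : EuclideanSpace ℝ (Fin q)) - (g x : EuclideanSpace ℝ (Fin q))‖ < ε := by
  classical
  obtain ⟨W, hWopen, hYW, r, hr⟩ := hretr
  set K : Set (EuclideanSpace ℝ (Fin q)) := Set.range (fun x : A => (f x : EuclideanSpace ℝ (Fin q))) with hKdef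
  have hKcomp : IsCompact K := isCompact_range (continuous_subtype_val.comp f.continuous)
  have hKW : K ⊆ W := by rintro _ ⟨x, rfl⟩; exact hYW (f x).2
  obtain ⟨δ₀, hδ₀, hthick⟩ := hKcomp.exists_thickening_subset_open hWopen hKW
  set L : Set (EuclideanSpace ℝ (Fin q)) := Metric.cthickening (δ₀ / 2) K with hLdef
  have hLW : L ⊆ W :=
    (Metric.cthickening_subset_thickening' hδ₀ (by linarith) K).trans hthick
  have hLcomp : IsCompact L := hKcomp.cthickening
  set B : Set (EuclideanSpace ℝ (Fin q)) :=
    Subtype.val '' {w : L | ε / 2 ≤ ‖(r ⟨(w : EuclideanSpace ℝ (Fin q)), hLW w.2⟩ : EuclideanSpace ℝ (Fin q)) - (w : EuclideanSpace ℝ (Fin q))‖} with hBdef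
  have hBcomp : IsCompact B := by
    apply IsCompact.image _ continuous_subtype_val
    have hcl : IsClosed {w : L | ε / 2 ≤ ‖(r ⟨(w : EuclideanSpace ℝ (Fin q)), hLW w.2⟩ : EuclideanSpace ℝ (Fin q)) - (w : EuclideanSpace ℝ (Fin q))‖} := by
      apply isClosed_le continuous_const
      apply Continuous.norm
      apply Continuous.sub _ continuous_subtype_val
      exact continuous_subtype_val.comp
        (r.continuous.comp (continuous_subtype_val.subtype_mk _))
    haveI := isCompact_iff_compactSpace.mp hLcomp
    exact hcl.isCompact
  have hKB : K ⊆ Bᶜ := by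
    rintro _ ⟨x, rfl⟩ ⟨w, hw, hweq⟩
    have hwY : (w : EuclideanSpace ℝ (Fin q)) ∈ Y := by rw [hweq]; exact (f x).2
    have := hr ⟨(w : EuclideanSpace ℝ (Fin q)), hwY⟩
    simp only [Set.mem_setOf_eq] at hw
    rw [show (⟨(w : EuclideanSpace ℝ (Fin q)), hLW w.2⟩ : W) = ⟨(w : EuclideanSpace ℝ (Fin q)), hYW hwY⟩ from rfl, this] at hw
    simp at hw
    linarith
  obtain ⟨δ₁, hδ₁, hthick₁⟩ :=
    hKcomp.exists_thickening_subset_open hBcomp.isClosed.isOpen_compl hKB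
  set δ : ℝ := min (min (δ₀ / 2) δ₁) (ε / 2) with hδdef
  have hδpos : 0 < δ := by positivity
  have memL : ∀ (x : A) (z : EuclideanSpace ℝ (Fin q)), ‖z - (f x : EuclideanSpace ℝ (Fin q))‖ < δ → z ∈ L := by
    intro x z hz
    apply Metric.thickening_subset_cthickening
    rw [Metric.mem_thickening_iff]
    exact ⟨f x, ⟨x, rfl⟩, lt_of_lt_of_le (by rwa [dist_eq_norm])
      (le_trans (min_le_left _ _) (min_le_left _ _))⟩
  have memW : ∀ (x : A) (z : EuclideanSpace ℝ (Fin q)), ‖z - (f x : EuclideanSpace ℝ (Fin q))‖ < δ → z ∈ W := fun x z hz =>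
    hLW (memL x z hz)
  have close : ∀ (x : A) (z : EuclideanSpace ℝ (Fin q)) (hzW : z ∈ W), ‖z - (f x : EuclideanSpace ℝ (Fin q))‖ < δ →
      ‖(r ⟨z, hzW⟩ : EuclideanSpace ℝ (Fin q)) - (f x : EuclideanSpace ℝ (Fin q))‖ < ε := by
    intro x z hzW hz
    have hzL : z ∈ L := memL x z hz
    have hzB : z ∉ B := by
      apply hthick₁
      rw [Metric.mem_thickening_iff]
      refine ⟨f x, ⟨x, rfl⟩, lt_of_lt_of_le (by rwa [dist_eq_norm]) ?_⟩
      exact le_trans (min_le_left _ _) (min_le_right _ _)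
    have hlt : ‖(r ⟨z, hLW hzL⟩ : EuclideanSpace ℝ (Fin q)) - z‖ < ε / 2 := by
      by_contra h
      exact hzB ⟨⟨z, hzL⟩, le_of_not_gt h, rfl⟩
    have h2 : ‖z - (f x : EuclideanSpace ℝ (Fin q))‖ < ε / 2 :=
      lt_of_lt_of_le hz (min_le_right _ _)
    calc ‖(r ⟨z, hzW⟩ : EuclideanSpace ℝ (Fin q)) - (f x : EuclideanSpace ℝ (Fin q))‖
        ≤ ‖(r ⟨z, hzW⟩ : EuclideanSpace ℝ (Fin q)) - z‖ + ‖z - (f x : EuclideanSpace ℝ (Fin q))‖ := by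
          simpa [dist_eq_norm] using
            dist_triangle ((r ⟨z, hzW⟩ : Y) : EuclideanSpace ℝ (Fin q)) z (f x : EuclideanSpace ℝ (Fin q))
      _ < ε / 2 + ε / 2 := by
          have : (⟨z, hzW⟩ : W) = ⟨z, hLW hzL⟩ := rfl
          rw [this]; exact add_lt_add_of_lt_of_lt hlt h2
      _ = ε := by ring
  refine ⟨δ, hδpos, ?_⟩
  intro φ hφ
  -- Tietze extension of φ - f on D
  obtain ⟨v, hv⟩ := ContinuousMap.exists_restrict_eq (Y := EuclideanSpace ℝ (Fin q)) hD
    ⟨fun x => (φ x : EuclideanSpace ℝ (Fin q)) - (f (x : A) : EuclideanSpace ℝ (Fin q)), by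
      exact (continuous_subtype_val.comp φ.continuous).sub
        ((continuous_subtype_val.comp f.continuous).comp continuous_subtype_val)⟩
  have hvD : ∀ x : D, v (x : A) = (φ x : EuclideanSpace ℝ (Fin q)) - (f (x : A) : EuclideanSpace ℝ (Fin q)) := by
    intro x
    have := congrFun (congrArg DFunLike.coe hv) x
    simpa using this
  set V : Set A := {x : A | ‖v x‖ < δ} with hVdef
  have hVopen : IsOpen V := isOpen_lt v.continuous.norm continuous_const
  have hDV : D ⊆ V := by
    intro x hx
    have := hφ ⟨x, hx⟩
    have h2 := hvD ⟨x, hx⟩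
    simp only [hVdef, Set.mem_setOf_eq, h2]
    rwa [norm_sub_rev]
  obtain ⟨χ, hχ0, hχ1, hχmem⟩ :=
    exists_continuous_zero_one_of_isClosed hVopen.isClosed_compl hD
      (by rw [Set.disjoint_compl_left_iff_subset]; exact hDV)
  set w : A → EuclideanSpace ℝ (Fin q) := fun x => χ x • v x with hwdef
  have hwcont : Continuous w := (χ.continuous.smul v.continuous)
  have hwsmall : ∀ x : A, ‖w x‖ < δ := by
    intro x
    by_cases hx : x ∈ V
    · have : ‖w x‖ ≤ ‖v x‖ := by
        simp only [hwdef, norm_smul, Real.norm_eq_abs,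
          abs_of_nonneg (hχmem x).1]
        calc χ x * ‖v x‖ ≤ 1 * ‖v x‖ :=
              mul_le_mul_of_nonneg_right (hχmem x).2 (norm_nonneg _)
          _ = ‖v x‖ := one_mul _
      exact lt_of_le_of_lt this hx
    · have : χ x = 0 := hχ0 hx
      simp [hwdef, this, hδpos]
  have harg : ∀ x : A, ‖((f x : EuclideanSpace ℝ (Fin q)) + w x) - (f x : EuclideanSpace ℝ (Fin q))‖ < δ := by
    intro x; rw [add_sub_cancel_left]; exact hwsmall x
  set g : C(A, Y) :=
    ⟨fun x => r ⟨(f x : EuclideanSpace ℝ (Fin q)) + w x, memW x _ (harg x)⟩, by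
      exact r.continuous.comp
        (((continuous_subtype_val.comp f.continuous).add hwcont).subtype_mk _)⟩
    with hgdef
  refine ⟨g, ?_, ?_⟩
  · intro x
    have hwx : w (x : A) = (φ x : EuclideanSpace ℝ (Fin q)) - (f (x : A) : EuclideanSpace ℝ (Fin q)) := by
      simp only [hwdef, hχ1 x.2, Pi.one_apply, one_smul, hvD x]
    have hsum : (f (x : A) : EuclideanSpace ℝ (Fin q)) + w (x : A) = (φ x : EuclideanSpace ℝ (Fin q)) := by rw [hwx]; abel
    have hmem : (f (x : A) : EuclideanSpace ℝ (Fin q)) + w (x : A) ∈ Y := hsum ▸ (φ x).2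
    have : (⟨(f (x : A) : EuclideanSpace ℝ (Fin q)) + w (x : A), memW (x : A) _ (harg (x : A))⟩ : W)
        = ⟨(φ x : EuclideanSpace ℝ (Fin q)), hYW (φ x).2⟩ := Subtype.ext hsum
    apply Subtype.ext
    show (g (x : A) : EuclideanSpace ℝ (Fin q)) = (φ x : EuclideanSpace ℝ (Fin q))
    simp only [hgdef, ContinuousMap.coe_mk, this]
    exact hr (φ x)
  · intro x
    rw [norm_sub_rev]
    exact close x _ (memW x _ (harg x)) (harg x)
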